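/- Let Γ = ⟨α_1, …, α_k⟩ ⊂ ℕ^d be an affine semigroup and γ ∈ Γ. For each i ≤ k with γ − α_i ∈ Γ, let T_i denote the image in K_γ of a minimum weight spanning tree of K_{γ−α_i} under the cover morphism ψ_i (the map sending each factorization z ∈ Z_Γ(γ−α_i) to z + e_i ∈ Z_Γ(γ)). Let E' be the set of elements of the Graver basis of Γ that lie in Z_Γ(γ) × Z_Γ(γ), and let G' be the graph with vertex set Z_Γ(γ) and edge set E(T_1) ∪ ⋯ ∪ E(T_k) ∪ E'. Then any minimum weight spanning tree of G' is also a minimum weight spanning tree of the catenary graph K_γ. -/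
import Mathlib


open Finset

/-- The factorization homomorphism `φ_Γ : ℕ^k → ℕ^d` determined by the
generators `α 1, …, α k`. -/
def phi {d k : ℕ} (α : Fin k → Fin d → ℕ) (z : Fin k → ℕ) : Fin d → ℕ :=
  ∑ i, z i • α i

/-- The length `|z|` of a factorization. -/
def len {k : ℕ} (z : Fin k → ℕ) : ℕ := ∑ i, z i

/-- The greatest common divisor `gcd(z,w)` of two factorizations. -/
def gcdF {k : ℕ} (z w : Fin k → ℕ) : Fin k → ℕ := fun i => min (z i) (w i)

/-- The distance `dist(z,w) = max(|z − gcd(z,w)|, |w − gcd(z,w)|)`. -/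
def distF {k : ℕ} (z w : Fin k → ℕ) : ℕ :=
  max (len (z - gcdF z w)) (len (w - gcdF z w))

/-- The set of factorizations `Z_Γ(γ)`, as a type. -/
def FactType {d k : ℕ} (α : Fin k → Fin d → ℕ) (γ : Fin d → ℕ) : Type :=
  {z : Fin k → ℕ // phi α z = γ}

/-- The weight of a walk in an edge-weighted graph: the maximum of the weights
of its edges (`0` for a trivial walk). -/
def walkWeight {V : Type*} (wt : V → V → ℕ) {G : SimpleGraph V} {u v : V}
    (p : G.Walk u v) : ℕ :=
  (p.darts.map fun e => wt e.toProd.1 e.toProd.2).foldr max 0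

/-- `T` is a minimum weight spanning tree of the graph `G` with edge weights
`wt`: it is a spanning tree of `G`, and the unique path in `T` between any two
vertices is a minimum weight chain in `G`. -/
def IsMWSpanningTree {V : Type*} (wt : V → V → ℕ) (G T : SimpleGraph V) : Prop :=
  T ≤ G ∧ T.IsTree ∧
    ∀ (u v : V) (p : T.Walk u v), p.IsPath →
      ∀ q : G.Walk u v, walkWeight wt p ≤ walkWeight wt q

/-- There is an `N`-chain from `z` to `w` (w.r.t. the distance function `wt`). -/
def IsNChain {V : Type*} (wt : V → V → ℕ) (N : ℕ) (z w : V) : Prop :=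
  ∃ (r : ℕ) (c : Fin (r + 1) → V), c 0 = z ∧ c (Fin.last r) = w ∧
    ∀ i : Fin r, wt (c i.castSucc) (c i.succ) ≤ N

/-- The catenary degree `c(γ)`: the smallest `N` such that any two
factorizations of `γ` are connected by an `N`-chain. -/
noncomputable def catDeg {d k : ℕ} (α : Fin k → Fin d → ℕ) (γ : Fin d → ℕ) : ℕ :=
  sInf {N : ℕ | ∀ z w : FactType α γ,
    IsNChain (fun a b => distF a.val b.val) N z w}

/-- The set of factorizations `Z_Γ(γ − α_i)`, realized as the set of `z` with
`φ_Γ(z) + α_i = γ` (it is empty when `γ − α_i ∉ Γ`). -/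
def FactSub {d k : ℕ} (α : Fin k → Fin d → ℕ) (γ : Fin d → ℕ) (i : Fin k) : Type :=
  {z : Fin k → ℕ // phi α z + α i = γ}

/-- `p` belongs to the Graver basis of `Γ`: `p` is a minimal element, with
respect to the componentwise order on `ℕ^k × ℕ^k`, of
`{(z,w) : φ_Γ(z) = φ_Γ(w)} \ {(0,0)}`. -/
def IsGraver {d k : ℕ} (α : Fin k → Fin d → ℕ)
    (p : (Fin k → ℕ) × (Fin k → ℕ)) : Prop :=
  phi α p.1 = phi α p.2 ∧ p ≠ 0 ∧
    ∀ q : (Fin k → ℕ) × (Fin k → ℕ),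
      phi α q.1 = phi α q.2 → q ≠ 0 → q ≤ p → q = p

/-- The graph `G'` on `Z_Γ(γ)` whose edges are the images under the cover
morphisms `ψ_i : z ↦ z + e_i` of the edges of the trees `T i` on `Z_Γ(γ − α_i)`,
together with the Graver basis elements lying in `Z_Γ(γ) × Z_Γ(γ)`. -/
def Gprime {d k : ℕ} (α : Fin k → Fin d → ℕ) (γ : Fin d → ℕ)
    (T : ∀ i : Fin k, SimpleGraph (FactSub α γ i)) :
    SimpleGraph (FactType α γ) :=
  SimpleGraph.fromRel fun u v =>
    (∃ (i : Fin k) (z w : FactSub α γ i), (T i).Adj z w ∧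
      u.val = z.val + Pi.single i 1 ∧ v.val = w.val + Pi.single i 1) ∨
    IsGraver α (u.val, v.val)
/- ### Auxiliary lemmas ### -/

lemma phi_add {d k : ℕ} (α : Fin k → Fin d → ℕ) (x y : Fin k → ℕ) :
    phi α (x + y) = phi α x + phi α y := by
  unfold phi
  rw [← Finset.sum_add_distrib]
  exact Finset.sum_congr rfl fun i _ => by simp [add_smul]

lemma phi_single {d k : ℕ} (α : Fin k → Fin d → ℕ) (i : Fin k) :
    phi α (Pi.single i 1) = α i := by
  unfold phi
  rw [Finset.sum_eq_single i]
  · simp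
  · intro j _ hj; simp [Pi.single_eq_of_ne hj]
  · simp

lemma len_mono {k : ℕ} {x y : Fin k → ℕ} (h : ∀ i, x i ≤ y i) : len x ≤ len y :=
  Finset.sum_le_sum fun i _ => h i

lemma eq_of_le_of_len_le {k : ℕ} {x y : Fin k → ℕ} (h : ∀ i, x i ≤ y i)
    (hl : len y ≤ len x) : x = y := by
  funext j
  by_contra hne
  have hlt : ∑ i, x i < ∑ i, y i :=
    Finset.sum_lt_sum (fun i _ => h i) ⟨j, Finset.mem_univ j, lt_of_le_of_ne (h j) hne⟩
  exact absurd hl (by unfold len at *; omega)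

lemma gcdF_add {k : ℕ} (x y s : Fin k → ℕ) : gcdF (x + s) (y + s) = gcdF x y + s := by
  funext j
  simp only [gcdF, Pi.add_apply]
  omega

lemma distF_add {k : ℕ} (x y s : Fin k → ℕ) : distF (x + s) (y + s) = distF x y := by
  unfold distF
  rw [gcdF_add]
  have h1 : x + s - (gcdF x y + s) = x - gcdF x y := by
    funext j; simp only [Pi.sub_apply, Pi.add_apply]; omega
  have h2 : y + s - (gcdF x y + s) = y - gcdF x y := by
    funext j; simp only [Pi.sub_apply, Pi.add_apply]; omega
  rw [h1, h2]

lemma foldr_max (l : List ℕ) (a : ℕ) : l.foldr max a = max (l.foldr max 0) a := by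
  induction l with
  | nil => simp
  | cons x xs ih => simp [List.foldr_cons, ih]

lemma walkWeight_nil {V : Type*} (wt : V → V → ℕ) {G : SimpleGraph V} {u : V} :
    walkWeight wt (SimpleGraph.Walk.nil : G.Walk u u) = 0 := rfl

lemma walkWeight_cons {V : Type*} (wt : V → V → ℕ) {G : SimpleGraph V} {u v w : V}
    (h : G.Adj u v) (p : G.Walk v w) :
    walkWeight wt (SimpleGraph.Walk.cons h p) = max (wt u v) (walkWeight wt p) := by
  simp only [walkWeight, SimpleGraph.Walk.darts_cons, List.map_cons, List.foldr_cons]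

lemma walkWeight_append {V : Type*} (wt : V → V → ℕ) {G : SimpleGraph V} {u v w : V}
    (p : G.Walk u v) (q : G.Walk v w) :
    walkWeight wt (p.append q) = max (walkWeight wt p) (walkWeight wt q) := by
  simp only [walkWeight, SimpleGraph.Walk.darts_append, List.map_append, List.foldr_append]
  rw [foldr_max]

lemma walkWeight_copy {V : Type*} (wt : V → V → ℕ) {G : SimpleGraph V} {u v u' v' : V}
    (p : G.Walk u v) (hu : u = u') (hv : v = v') :
    walkWeight wt (p.copy hu hv) = walkWeight wt p := by
  simp [walkWeight, SimpleGraph.Walk.darts_copy]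

lemma walkWeight_map {V W : Type*} (wt : V → V → ℕ) (wt' : W → W → ℕ)
    {G : SimpleGraph V} {G' : SimpleGraph W} (f : G →g G')
    (hf : ∀ a b, wt' (f a) (f b) = wt a b) {u v : V} (p : G.Walk u v) :
    walkWeight wt' (p.map f) = walkWeight wt p := by
  induction p with
  | nil => rfl
  | cons h p ih =>
    rw [SimpleGraph.Walk.map_cons, walkWeight_cons, walkWeight_cons, ih, hf]

/-- Existence of a Graver element below a nonzero element of the kernel. -/
lemma exists_graver_le {d k : ℕ} (α : Fin k → Fin d → ℕ)
    (p : (Fin k → ℕ) × (Fin k → ℕ)) (hp : phi α p.1 = phi α p.2) (hp0 : p ≠ 0) :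
    ∃ q, IsGraver α q ∧ q ≤ p := by
  set S : Set ℕ := {n | ∃ q : (Fin k → ℕ) × (Fin k → ℕ),
    phi α q.1 = phi α q.2 ∧ q ≠ 0 ∧ q ≤ p ∧ len q.1 + len q.2 = n} with hS
  have hmem : (len p.1 + len p.2) ∈ S := ⟨p, hp, hp0, le_refl p, rfl⟩
  obtain ⟨q, hq1, hq2, hq3, hq4⟩ := Nat.sInf_mem ⟨_, hmem⟩
  refine ⟨q, ⟨hq1, hq2, ?_⟩, hq3⟩
  intro r hr1 hr2 hrq
  have h1 : ∀ i, r.1 i ≤ q.1 i := fun i => hrq.1 i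
  have h2 : ∀ i, r.2 i ≤ q.2 i := fun i => hrq.2 i
  have hle : len r.1 + len r.2 ≤ len q.1 + len q.2 :=
    Nat.add_le_add (len_mono h1) (len_mono h2)
  have hge : sInf S ≤ len r.1 + len r.2 :=
    Nat.sInf_le ⟨r, hr1, hr2, hrq.trans hq3, rfl⟩
  rw [hq4] at hle
  have heq : len r.1 + len r.2 = sInf S := le_antisymm hle hge
  have hl1 : len q.1 ≤ len r.1 := by
    have := len_mono h1; have := len_mono h2; omega
  have hl2 : len q.2 ≤ len r.2 := by
    have := len_mono h1; have := len_mono h2; omega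
  exact Prod.ext (eq_of_le_of_len_le h1 hl1) (eq_of_le_of_len_le h2 hl2)

/-- Case A: if `u` and `v` share support at coordinate `i`, there is a chain
from `u` to `v` through the image of the tree `T i` of weight at most
`dist(u,v)`. -/
lemma chainA {d k : ℕ} (α : Fin k → Fin d → ℕ) (γ : Fin d → ℕ)
    (T : ∀ i : Fin k, SimpleGraph (FactSub α γ i))
    (hT : ∀ i : Fin k, Nonempty (FactSub α γ i) →
      IsMWSpanningTree (fun z w => distF z.val w.val) ⊤ (T i))
    {u v : FactType α γ} (huv : u ≠ v) (i : Fin k)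
    (hu : 1 ≤ u.val i) (hv : 1 ≤ v.val i) :
    ∃ q : (Gprime α γ T).Walk u v,
      walkWeight (fun a b => distF a.val b.val) q ≤ distF u.val v.val := by
  classical
  set s : Fin k → ℕ := Pi.single i 1 with hs
  have hsub : ∀ (x : Fin k → ℕ), 1 ≤ x i → x - s + s = x := by
    intro x hx; funext j
    rcases eq_or_ne j i with rfl | hj
    · simp only [hs, Pi.add_apply, Pi.sub_apply, Pi.single_eq_same]; omega
    · simp [hs, Pi.single_eq_of_ne hj]
  have memsub : ∀ (x : FactType α γ), 1 ≤ x.val i → phi α (x.val - s) + α i = γ := by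
    intro x hx
    have h2 := x.2
    rw [← hsub x.val hx, phi_add, phi_single] at h2
    exact h2
  set u' : FactSub α γ i := ⟨u.val - s, memsub u hu⟩ with hu'
  set v' : FactSub α γ i := ⟨v.val - s, memsub v hv⟩ with hv'
  obtain ⟨hle, htree, hmin⟩ := hT i ⟨u'⟩
  have fmem : ∀ (z : FactSub α γ i), phi α (z.val + s) = γ := fun z => by
    rw [phi_add, phi_single]; exact z.2
  let f : (T i) →g (Gprime α γ T) :=
    { toFun := fun z => ⟨z.val + s, fmem z⟩
      map_rel' := by
        intro a b hab
        simp only [Gprime, SimpleGraph.fromRel_adj]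
        refine ⟨?_, Or.inl (Or.inl ⟨i, a, b, hab, rfl, rfl⟩)⟩
        intro hEq
        apply hab.ne
        apply Subtype.ext
        have hEq' : a.val + s = b.val + s := congrArg Subtype.val hEq
        exact add_right_cancel hEq'
      }
  have hu'f : (f u' : FactType α γ) = u := Subtype.ext (hsub u.val hu)
  have hv'f : (f v' : FactType α γ) = v := Subtype.ext (hsub v.val hv)
  have hne : u' ≠ v' := by
    intro h
    apply huv
    apply Subtype.ext
    rw [← hsub u.val hu, ← hsub v.val hv]
    exact congrArg (· + s) (congrArg Subtype.val h)
  obtain ⟨r⟩ := htree.isConnected.preconnected u' v'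
  set p := r.toPath with hp
  have htop : (⊤ : SimpleGraph (FactSub α γ i)).Adj u' v' := by
    rw [SimpleGraph.top_adj]; exact hne
  have hq0 := hmin u' v' p.val p.2 (SimpleGraph.Walk.cons htop SimpleGraph.Walk.nil)
  have hq0w : walkWeight (fun z w : FactSub α γ i => distF z.val w.val)
      (SimpleGraph.Walk.cons htop SimpleGraph.Walk.nil) = distF u'.val v'.val := by
    rw [walkWeight_cons, walkWeight_nil]
    simp
  have hdist : distF u'.val v'.val = distF u.val v.val := by
    conv_rhs => rw [← hsub u.val hu, ← hsub v.val hv]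
    exact (distF_add _ _ s).symm
  have hf : ∀ a b : FactSub α γ i, distF (f a).val (f b).val = distF a.val b.val :=
    fun a b => distF_add a.val b.val s
  refine ⟨(p.val.map f).copy hu'f hv'f, ?_⟩
  rw [walkWeight_copy, walkWeight_map _ _ f hf]
  rw [hq0w, hdist] at hq0
  exact hq0

/-- The key chain lemma: any two factorizations of `γ` are joined in `G'` by a
walk of weight at most their distance. -/
lemma keyAux {d k : ℕ} (α : Fin k → Fin d → ℕ) (γ : Fin d → ℕ)
    (T : ∀ i : Fin k, SimpleGraph (FactSub α γ i))
    (hT : ∀ i : Fin k, Nonempty (FactSub α γ i) →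
      IsMWSpanningTree (fun z w => distF z.val w.val) ⊤ (T i)) (n : ℕ) :
    ∀ z w : FactType α γ, len z.val + len w.val ≤ n →
      ∃ q : (Gprime α γ T).Walk z w,
        walkWeight (fun a b => distF a.val b.val) q ≤ distF z.val w.val := by
  induction n using Nat.strong_induction_on with
  | _ n ih =>
  intro z w hn
  by_cases hzw : z = w
  · subst hzw
    exact ⟨SimpleGraph.Walk.nil, by rw [walkWeight_nil]; exact Nat.zero_le _⟩
  by_cases hg : ∃ i, 1 ≤ z.val i ∧ 1 ≤ w.val i
  · obtain ⟨i, h1, h2⟩ := hg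
    exact chainA α γ T hT hzw i h1 h2
  · push_neg at hg
    have hmin0 : ∀ j, z.val j = 0 ∨ w.val j = 0 := by
      intro j
      rcases Nat.eq_zero_or_pos (z.val j) with h | h
      · exact Or.inl h
      · have := hg j h; omega
    have hzw0 : (z.val, w.val) ≠ 0 := by
      intro h
      apply hzw
      apply Subtype.ext
      have h1 : z.val = 0 := congrArg Prod.fst h
      have h2 : w.val = 0 := congrArg Prod.snd h
      rw [h1, h2]
    obtain ⟨⟨a, b⟩, hG, hab⟩ := exists_graver_le α (z.val, w.val) (by rw [z.2, w.2]) hzw0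
    have ha : ∀ j, a j ≤ z.val j := fun j => hab.1 j
    have hb : ∀ j, b j ≤ w.val j := fun j => hab.2 j
    set m : Fin k → ℕ := z.val - a + b with hm
    have hmj : ∀ j, m j = z.val j - a j + b j := fun j => rfl
    have hmγ : phi α m = γ := by
      have hza : z.val - a + a = z.val := funext fun j => by
        have := ha j; simp only [Pi.add_apply, Pi.sub_apply]; omega
      calc phi α (z.val - a + b) = phi α (z.val - a) + phi α b := phi_add ..
        _ = phi α (z.val - a) + phi α a := by rw [hG.1]
        _ = phi α (z.val - a + a) := (phi_add ..).symm
        _ = γ := by rw [hza]; exact z.2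
    set M : FactType α γ := ⟨m, hmγ⟩ with hM
    have hgzw : distF z.val w.val = max (len z.val) (len w.val) := by
      have h0 : gcdF z.val w.val = 0 := funext fun j => by
        simp only [gcdF, Pi.zero_apply]; rcases hmin0 j with h | h <;> omega
      unfold distF; rw [h0]; simp
    have hd1 : distF z.val m = max (len a) (len b) := by
      have hg1 : gcdF z.val m = z.val - a := funext fun j => by
        simp only [gcdF, hmj, Pi.sub_apply]
        rcases hmin0 j with h | h <;> (have := ha j; have := hb j; omega)
      have e1 : z.val - (z.val - a) = a := funext fun j => by
        simp only [Pi.sub_apply]; have := ha j; omega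
      have e2 : m - (z.val - a) = b := funext fun j => by
        simp only [hmj, Pi.sub_apply]; have := ha j; omega
      unfold distF; rw [hg1, e1, e2]
    have hd2 : distF m w.val = max (len (z.val - a)) (len (w.val - b)) := by
      have hg2 : gcdF m w.val = b := funext fun j => by
        simp only [gcdF, hmj]
        rcases hmin0 j with h | h <;> (have := ha j; have := hb j; omega)
      have e1 : m - b = z.val - a := funext fun j => by
        simp only [hmj, Pi.sub_apply]; omega
      unfold distF; rw [hg2, e1]
    have hb1 : distF z.val m ≤ distF z.val w.val := by
      rw [hd1, hgzw]
      exact max_le_max (len_mono ha) (len_mono hb)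
    have hb2 : distF m w.val ≤ distF z.val w.val := by
      rw [hd2, hgzw]
      exact max_le_max (len_mono fun j => by simp only [Pi.sub_apply]; omega)
        (len_mono fun j => by simp only [Pi.sub_apply]; omega)
    have hc1 : ∃ c : (Gprime α γ T).Walk z M,
        walkWeight (fun a b => distF a.val b.val) c ≤ distF z.val w.val := by
      by_cases hzM : z = M
      · exact ⟨SimpleGraph.Walk.nil.copy rfl hzM,
          by rw [walkWeight_copy, walkWeight_nil]; exact Nat.zero_le _⟩
      by_cases hsup : ∃ i, 1 ≤ z.val i ∧ 1 ≤ m i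
      · obtain ⟨i, hi1, hi2⟩ := hsup
        obtain ⟨c, hc⟩ := chainA α γ T hT hzM i hi1 hi2
        exact ⟨c, hc.trans hb1⟩
      · push_neg at hsup
        have hza : z.val = a := funext fun j => by
          rcases Nat.eq_zero_or_pos (z.val j) with h | h
          · have := ha j; omega
          · have h2 := hsup j h; have h3 := hmj j; have := ha j; have := hb j; omega
        have hmb : m = b := funext fun j => by
          have h3 := hmj j; have h4 := congrFun hza j; omega
        have hpair : (z.val, M.val) = (a, b) := by
          show (z.val, m) = (a, b)
          rw [hza, hmb]
        have hadj : (Gprime α γ T).Adj z M := by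
          simp only [Gprime, SimpleGraph.fromRel_adj]
          refine ⟨hzM, Or.inl (Or.inr ?_)⟩
          rw [hpair]; exact hG
        refine ⟨SimpleGraph.Walk.cons hadj SimpleGraph.Walk.nil, ?_⟩
        rw [walkWeight_cons, walkWeight_nil]
        simpa using hb1
    have hc2 : ∃ c : (Gprime α γ T).Walk M w,
        walkWeight (fun a b => distF a.val b.val) c ≤ distF z.val w.val := by
      by_cases hMw : M = w
      · exact ⟨SimpleGraph.Walk.nil.copy rfl hMw,
          by rw [walkWeight_copy, walkWeight_nil]; exact Nat.zero_le _⟩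
      by_cases hsup : ∃ i, 1 ≤ m i ∧ 1 ≤ w.val i
      · obtain ⟨i, hi1, hi2⟩ := hsup
        obtain ⟨c, hc⟩ := chainA α γ T hT hMw i hi1 hi2
        exact ⟨c, hc.trans hb2⟩
      · push_neg at hsup
        have hb0 : b = 0 := funext fun j => by
          simp only [Pi.zero_apply]
          rcases Nat.eq_zero_or_pos (b j) with h' | h'
          · exact h'
          · have hm1 : 1 ≤ m j := by have := hmj j; omega
            have := hsup j hm1; have := hb j; omega
        have ha0 : a ≠ 0 := by
          intro h
          exact hG.2.1 (by rw [Prod.ext_iff]; exact ⟨h, hb0⟩)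
        have hlen_a : 1 ≤ len a := by
          by_contra h
          push_neg at h
          apply ha0
          have h0 : len a = 0 := by omega
          unfold len at h0
          funext j
          have := Finset.sum_eq_zero_iff.mp h0 j (Finset.mem_univ j)
          simpa using this
        have h1 : len m + len a = len z.val := by
          unfold len
          rw [← Finset.sum_add_distrib]
          refine Finset.sum_congr rfl fun j _ => ?_
          have h3 := hmj j
          have hbj : b j = 0 := by rw [hb0]; rfl
          have := ha j
          omega
        have hlt : len M.val + len w.val < n := by
          show len m + len w.val < n
          omega
        obtain ⟨c, hc⟩ := ih (len M.val + len w.val) hlt M w le_rfl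
        exact ⟨c, hc.trans hb2⟩
    obtain ⟨c1, hc1⟩ := hc1
    obtain ⟨c2, hc2⟩ := hc2
    exact ⟨c1.append c2, by rw [walkWeight_append]; omega⟩

lemma key {d k : ℕ} (α : Fin k → Fin d → ℕ) (γ : Fin d → ℕ)
    (T : ∀ i : Fin k, SimpleGraph (FactSub α γ i))
    (hT : ∀ i : Fin k, Nonempty (FactSub α γ i) →
      IsMWSpanningTree (fun z w => distF z.val w.val) ⊤ (T i))
    (z w : FactType α γ) :
    ∃ q : (Gprime α γ T).Walk z w,
      walkWeight (fun a b => distF a.val b.val) q ≤ distF z.val w.val :=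
  keyAux α γ T hT (len z.val + len w.val) z w le_rfl

/-- If each `T i` is (the image under `ψ_i` of) a minimum weight spanning tree
of the catenary graph `K_{γ−α_i}` (whenever `γ − α_i ∈ Γ`), then any minimum
weight spanning tree of the graph `G'` (with vertex set `Z_Γ(γ)` and edges
`E(T_1) ∪ ⋯ ∪ E(T_k) ∪ E'`) is also a minimum weight spanning tree of the
catenary graph `K_γ`. -/
theorem stmt10 {d k : ℕ} (α : Fin k → Fin d → ℕ) (γ : Fin d → ℕ)
    (hγ : γ ∈ Set.range (phi α))
    (T : ∀ i : Fin k, SimpleGraph (FactSub α γ i))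
    (hT : ∀ i : Fin k, Nonempty (FactSub α γ i) →
      IsMWSpanningTree (fun z w => distF z.val w.val) ⊤ (T i))
    (T' : SimpleGraph (FactType α γ))
    (hT' : IsMWSpanningTree (fun z w => distF z.val w.val) (Gprime α γ T) T') :
    IsMWSpanningTree (fun z w => distF z.val w.val) ⊤ T' := by
  obtain ⟨hle', htree', hmin'⟩ := hT'
  refine ⟨le_top, htree', ?_⟩
  intro u v p hp q
  have conv : ∀ {x y : FactType α γ} (q : (⊤ : SimpleGraph (FactType α γ)).Walk x y),
      ∃ q' : (Gprime α γ T).Walk x y,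
        walkWeight (fun a b => distF a.val b.val) q' ≤
          walkWeight (fun a b => distF a.val b.val) q := by
    intro x y q
    induction q with
    | nil => exact ⟨SimpleGraph.Walk.nil, le_refl _⟩
    | @cons x' m' y' h r ihr =>
      obtain ⟨c, hc⟩ := key α γ T hT x' m'
      obtain ⟨q', hq'⟩ := ihr
      refine ⟨c.append q', ?_⟩
      rw [walkWeight_append, walkWeight_cons]
      exact max_le_max hc hq'
  obtain ⟨q', hq'⟩ := conv q
  exact (hmin' u v p hp q').trans hq'
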